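/- Let p : Fin n → ℝ² be injective with no three of the points collinear. Let m ≥ 3 and let q : Fin m → Fin n be injective indices such that for each t (indices taken cyclically modulo m), all points p(q_s) with s ∉ {t, t+1} lie strictly on the same side of the line through p(q_t) and p(q_{t+1}) — i.e. the points p(q_0), …, p(q_{m−1}) are the vertices, in cyclic order, of a convex polygon. Let v : Fin n → ℝ² satisfy ⟪pᵢ − pⱼ, vᵢ − vⱼ⟫ ≥ 0 for all pairs i, j, and ⟪p(q_t) − p(q_{t+1}), v(q_t) − v(q_{t+1})⟫ = 0 for every cyclically consecutive pair. Then ⟪pᵢ − pⱼ, vᵢ − vⱼ⟫ = 0 for every pair of indices i, j with both pᵢ and pⱼ in the convex hull of {p(q_0), …, p(q_{m−1})}. -/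

import Mathlib

open scoped RealInnerProductSpace

/-- `det3 a b c` is the determinant of the 3×3 matrix with rows
`(a₁, a₂, 1)`, `(b₁, b₂, 1)`, `(c₁, c₂, 1)`; its sign tells on which side of the
oriented line through `a` and `b` the point `c` lies. -/
noncomputable def det3 (a b c : EuclideanSpace ℝ (Fin 2)) : ℝ :=
  Matrix.det !![a 0, a 1, 1; b 0, b 1, 1; c 0, c 1, 1]

lemma inner2 (x y : EuclideanSpace ℝ (Fin 2)) : ⟪x, y⟫ = x 0 * y 0 + x 1 * y 1 := by
  simp [PiLp.inner_apply, Fin.sum_univ_two, RCLike.inner_apply, mul_comm]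

lemma det3_expand (a b c : EuclideanSpace ℝ (Fin 2)) :
    det3 a b c = (b 0 - a 0) * (c 1 - a 1) - (b 1 - a 1) * (c 0 - a 0) := by
  simp [det3, Matrix.det_fin_three, Matrix.vecHead, Matrix.vecTail]; ring

lemma ept_ext {x y : EuclideanSpace ℝ (Fin 2)} (h0 : x 0 = y 0) (h1 : x 1 = y 1) : x = y := by
  ext k; fin_cases k <;> assumption

lemma solve2 {u0 u1 z0 z1 W0 W1 : ℝ} (h1 : u0*W0 + u1*W1 = 0) (h2 : z0*W0 + z1*W1 = 0)
    (hD : u0*z1 - u1*z0 ≠ 0) : W0 = 0 ∧ W1 = 0 := by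
  constructor
  · have h3 : W0 * (u0*z1 - u1*z0) = 0 := by linear_combination z1*h1 - u1*h2
    rcases mul_eq_zero.mp h3 with h | h
    · exact h
    · exact absurd h hD
  · have h3 : W1 * (u0*z1 - u1*z0) = 0 := by linear_combination u0*h2 - z0*h1
    rcases mul_eq_zero.mp h3 with h | h
    · exact h
    · exact absurd h hD

lemma collinear_of_det3 {a b c : EuclideanSpace ℝ (Fin 2)} (hba : b ≠ a) (h : det3 a b c = 0) :
    Collinear ℝ ({a, b, c} : Set (EuclideanSpace ℝ (Fin 2))) := by
  rw [det3_expand] at h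
  have hb : b 0 - a 0 ≠ 0 ∨ b 1 - a 1 ≠ 0 := by
    by_contra hcon
    push_neg at hcon
    exact hba (ept_ext (by linarith [hcon.1]) (by linarith [hcon.2]))
  rw [collinear_iff_of_mem (Set.mem_insert a {b, c})]
  refine ⟨b - a, ?_⟩
  rintro x (rfl | rfl | rfl)
  · exact ⟨0, by simp⟩
  · exact ⟨1, by simp⟩
  · rcases hb with hb0 | hb1
    · refine ⟨(x 0 - a 0) / (b 0 - a 0), ?_⟩
      apply ept_ext <;> simp only [PiLp.add_apply, PiLp.smul_apply, PiLp.sub_apply,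
        smul_eq_mul, vadd_eq_add]
      · field_simp; ring
      · field_simp; linear_combination h
    · refine ⟨(x 1 - a 1) / (b 1 - a 1), ?_⟩
      apply ept_ext <;> simp only [PiLp.add_apply, PiLp.smul_apply, PiLp.sub_apply,
        smul_eq_mul, vadd_eq_add]
      · field_simp; linear_combination -h
      · field_simp; ring

lemma sum_apply2 {m : ℕ} (s : Finset (Fin m)) (w : Fin m → ℝ)
    (P : Fin m → EuclideanSpace ℝ (Fin 2)) (k : Fin 2) :
    (∑ i ∈ s, w i • P i) k = ∑ i ∈ s, w i * P i k := by
  induction s using Finset.induction with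
  | empty => simp
  | insert h ih => simp [Finset.sum_insert, *]

open Fin.NatCast Fin.CommRing in
lemma cyclic_const {m : ℕ} [NeZero m] (f : Fin m → ℝ) (h : ∀ t, f (t + 1) ≤ f t) (t : Fin m) :
    f t = f 0 := by
  have chain : ∀ k l : ℕ, k ≤ l → f (l : Fin m) ≤ f (k : Fin m) := by
    intro k l hkl
    induction l with
    | zero => interval_cases k; exact le_refl _
    | succ l ih =>
      rcases Nat.lt_or_ge k (l + 1) with hk | hk
      · have h1 : ((l + 1 : ℕ) : Fin m) = (l : Fin m) + 1 := by push_cast; ring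
        calc f ((l + 1 : ℕ) : Fin m) = f ((l : Fin m) + 1) := by rw [h1]
          _ ≤ f (l : Fin m) := h _
          _ ≤ f (k : Fin m) := ih (by omega)
      · have : k = l + 1 := by omega
        subst this; exact le_refl _
  apply le_antisymm
  · have := chain 0 t.val (Nat.zero_le _)
    simpa [Fin.cast_val_eq_self] using this
  · have := chain t.val m t.isLt.le
    simpa [Fin.cast_val_eq_self, Fin.natCast_self] using this

open Fin.NatCast Fin.CommRing in
lemma sign_chain {m : ℕ} [NeZero m] (D : Fin m → ℝ)
    (hlink : ∀ t : Fin m, (0 < D t ↔ 0 < D (t + 1)) ∧ D t ≠ 0) :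
    (∀ t, 0 < D t) ∨ (∀ t, D t < 0) := by
  have hiter : ∀ l : ℕ, (0 < D 0 ↔ 0 < D ((l : ℕ) : Fin m)) := by
    intro l
    induction l with
    | zero => rw [Nat.cast_zero]
    | succ l ih =>
      rw [show ((l + 1 : ℕ) : Fin m) = ((l : ℕ) : Fin m) + 1 by push_cast; ring]
      exact ih.trans (hlink _).1
  by_cases h0 : 0 < D 0
  · left
    intro t
    have h2 := hiter t.val
    rw [Fin.cast_val_eq_self] at h2
    exact h2.mp h0
  · right
    intro t
    have h2 := hiter t.val
    rw [Fin.cast_val_eq_self] at h2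
    exact lt_of_le_of_ne (not_lt.mp fun hh => h0 (h2.mpr hh)) (hlink t).2

open Fin.NatCast Fin.CommRing in
lemma vertex_rigid {m : ℕ} [NeZero m] (P0 P1 V0 V1 : Fin m → ℝ)
    (hE : ∀ t : Fin m, (P0 (t+1) - P0 t)^2 + (P1 (t+1) - P1 t)^2 ≠ 0)
    (hsign : (∀ t : Fin m, 0 < (P0 (t+1) - P0 t) * (P1 (t+2) - P1 (t+1))
                - (P1 (t+1) - P1 t) * (P0 (t+2) - P0 (t+1)))
           ∨ (∀ t : Fin m, (P0 (t+1) - P0 t) * (P1 (t+2) - P1 (t+1))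
                - (P1 (t+1) - P1 t) * (P0 (t+2) - P0 (t+1)) < 0))
    (hexp2 : ∀ t : Fin m, 0 ≤ (P0 t - P0 (t+2)) * (V0 t - V0 (t+2))
        + (P1 t - P1 (t+2)) * (V1 t - V1 (t+2)))
    (htight2 : ∀ t : Fin m, (P0 t - P0 (t+1)) * (V0 t - V0 (t+1))
        + (P1 t - P1 (t+1)) * (V1 t - V1 (t+1)) = 0) :
    ∃ r : ℝ, ∀ t : Fin m, V0 t = V0 0 - r * (P1 t - P1 0) ∧ V1 t = V1 0 + r * (P0 t - P0 0) := by
  have hFex : ∀ t : Fin m, ∃ r : ℝ,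
      V0 (t+1) - V0 t = -(r * (P1 (t+1) - P1 t)) ∧ V1 (t+1) - V1 t = r * (P0 (t+1) - P0 t) := by
    intro t
    refine ⟨((P0 (t+1) - P0 t) * (V1 (t+1) - V1 t) - (P1 (t+1) - P1 t) * (V0 (t+1) - V0 t))
      / ((P0 (t+1) - P0 t)^2 + (P1 (t+1) - P1 t)^2), ?_, ?_⟩
    · rw [div_mul_eq_mul_div, ← neg_div, eq_comm, div_eq_iff (hE t)]
      linear_combination -(P0 (t+1) - P0 t) * htight2 t
    · rw [div_mul_eq_mul_div, eq_comm, div_eq_iff (hE t)]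
      linear_combination -(P1 (t+1) - P1 t) * htight2 t
  choose rho hF0 hF1 using hFex
  have hmono : ∀ t : Fin m, 0 ≤ (rho t - rho (t+1)) *
      ((P0 (t+1) - P0 t) * (P1 (t+2) - P1 (t+1)) - (P1 (t+1) - P1 t) * (P0 (t+2) - P0 (t+1))) := by
    intro t
    have h1 := hF0 (t+1); have h2 := hF1 (t+1)
    rw [show t+1+1 = t+2 by ring] at h1 h2
    have key : (P0 t - P0 (t+2)) * (V0 t - V0 (t+2)) + (P1 t - P1 (t+2)) * (V1 t - V1 (t+2))
        = (rho t - rho (t+1)) *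
          ((P0 (t+1) - P0 t) * (P1 (t+2) - P1 (t+1)) - (P1 (t+1) - P1 t) * (P0 (t+2) - P0 (t+1))) := by
      linear_combination (-(P0 t - P0 (t+2))) * hF0 t + (-(P0 t - P0 (t+2))) * h1
        + (-(P1 t - P1 (t+2))) * hF1 t + (-(P1 t - P1 (t+2))) * h2
    rw [← key]; exact hexp2 t
  have hconst : ∀ t : Fin m, rho t = rho 0 := by
    rcases hsign with hs | hs
    · refine cyclic_const rho (fun t => ?_)
      by_contra hlt
      push_neg at hlt
      nlinarith [hmono t, hs t, mul_pos (sub_pos.mpr hlt) (hs t)]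
    · have h2 : ∀ t : Fin m, (fun t => -rho t) (t + 1) ≤ (fun t => -rho t) t := by
        intro t
        simp only
        by_contra hlt
        push_neg at hlt
        have hlt' : rho (t + 1) < rho t := by linarith
        nlinarith [hmono t, mul_pos (sub_pos.mpr hlt') (neg_pos.mpr (hs t))]
      intro t
      have := cyclic_const (fun t => -rho t) h2 t
      simpa using this
  refine ⟨rho 0, ?_⟩
  have claim : ∀ l : ℕ, V0 ((l : ℕ) : Fin m) = V0 0 - rho 0 * (P1 ((l : ℕ) : Fin m) - P1 0)
      ∧ V1 ((l : ℕ) : Fin m) = V1 0 + rho 0 * (P0 ((l : ℕ) : Fin m) - P0 0) := by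
    intro l
    induction l with
    | zero => norm_num
    | succ l ih =>
      have h1 : ((l + 1 : ℕ) : Fin m) = ((l : ℕ) : Fin m) + 1 := by push_cast; ring
      have e0 := hF0 ((l : ℕ) : Fin m)
      have e1 := hF1 ((l : ℕ) : Fin m)
      rw [hconst ((l : ℕ) : Fin m)] at e0 e1
      rw [h1]
      constructor
      · linarith [ih.1, e0]
      · linarith [ih.2, e1]
  intro t
  have := claim t.val
  rwa [Fin.cast_val_eq_self] at this

open Fin.NatCast Fin.CommRing in
/-- An expansive motion of a point set in general position which is
tight on all the edges of a convex subpolygon (with vertices `p ∘ q` in cyclic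
order) is tight on every pair of points lying in the convex hull of the polygon. -/
theorem convex_subpolygon_tight_implies_hull_tight
    (n m : ℕ) [NeZero m] (hm : 3 ≤ m)
    (p : Fin n → EuclideanSpace ℝ (Fin 2))
    (hinj : Function.Injective p)
    (hgp : ∀ i j k : Fin n, i ≠ j → j ≠ k → i ≠ k →
      ¬ Collinear ℝ ({p i, p j, p k} : Set (EuclideanSpace ℝ (Fin 2))))
    (q : Fin m → Fin n) (hq : Function.Injective q)
    (hconvex : ∀ t : Fin m,
      (∀ s : Fin m, s ≠ t → s ≠ t + 1 → 0 < det3 (p (q t)) (p (q (t + 1))) (p (q s))) ∨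
      (∀ s : Fin m, s ≠ t → s ≠ t + 1 → det3 (p (q t)) (p (q (t + 1))) (p (q s)) < 0))
    (v : Fin n → EuclideanSpace ℝ (Fin 2))
    (hexp : ∀ i j : Fin n, 0 ≤ ⟪p i - p j, v i - v j⟫)
    (htight : ∀ t : Fin m, ⟪p (q t) - p (q (t + 1)), v (q t) - v (q (t + 1))⟫ = 0) :
    ∀ i j : Fin n, p i ∈ convexHull ℝ (Set.range fun t => p (q t)) →
      p j ∈ convexHull ℝ (Set.range fun t => p (q t)) →
      ⟪p i - p j, v i - v j⟫ = 0 := by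
  -- basic `Fin m` arithmetic facts
  have hltne : ∀ k : ℕ, 0 < k → k < m → ((k : ℕ) : Fin m) ≠ 0 := by
    intro k hk hkm h
    have := congrArg Fin.val h
    rw [Fin.val_natCast] at this
    simp [Nat.mod_eq_of_lt hkm] at this
    omega
  have h10 : (1 : Fin m) ≠ 0 := by
    have := hltne 1 (by norm_num) (by omega)
    simpa using this
  have h20 : (2 : Fin m) ≠ 0 := by
    have := hltne 2 (by norm_num) (by omega)
    simpa using this
  have hne1 : ∀ t : Fin m, t + 1 ≠ t := by
    intro t h
    exact h10 (add_left_cancel (h.trans (add_zero t).symm))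
  have hne2 : ∀ t : Fin m, t + 2 ≠ t := by
    intro t h
    exact h20 (add_left_cancel (h.trans (add_zero t).symm))
  have hne21 : ∀ t : Fin m, t + 2 ≠ t + 1 := by
    intro t
    rw [show t + 2 = (t + 1) + 1 by ring]
    exact hne1 (t + 1)
  have hne31 : ∀ t : Fin m, t + 3 ≠ t + 1 := by
    intro t
    rw [show t + 3 = (t + 1) + 2 by ring]
    exact hne2 (t + 1)
  have hne32 : ∀ t : Fin m, t + 3 ≠ t + 2 := by
    intro t
    rw [show t + 3 = (t + 2) + 1 by ring]
    exact hne1 (t + 2)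
  -- cyclic symmetry of det3
  have hcyc : ∀ a b c : EuclideanSpace ℝ (Fin 2), det3 a b c = det3 c a b := by
    intro a b c
    rw [det3_expand, det3_expand]; ring
  -- the sign of the polygon is consistent
  have hlink : ∀ t : Fin m,
      (0 < det3 (p (q t)) (p (q (t + 1))) (p (q (t + 2))) ↔
        0 < det3 (p (q (t + 1))) (p (q (t + 1 + 1))) (p (q (t + 1 + 2)))) ∧
      det3 (p (q t)) (p (q (t + 1))) (p (q (t + 2))) ≠ 0 := by
    intro t
    have hDne : det3 (p (q t)) (p (q (t + 1))) (p (q (t + 2))) ≠ 0 := by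
      rcases hconvex t with h | h
      · exact ne_of_gt (h (t + 2) (hne2 t) (hne21 t))
      · exact ne_of_lt (h (t + 2) (hne2 t) (hne21 t))
    rw [show t + 1 + 1 = t + 2 by ring, show t + 1 + 2 = t + 3 by ring]
    rcases eq_or_ne (t + 3) t with h3 | h3
    · have heq : det3 (p (q (t + 1))) (p (q (t + 2))) (p (q (t + 3)))
          = det3 (p (q t)) (p (q (t + 1))) (p (q (t + 2))) := by
        rw [h3, hcyc]
      rw [heq]
      exact ⟨Iff.rfl, hDne⟩
    · rcases hconvex (t + 1) with h | h
      · have a1 := h t (Ne.symm (hne1 t)) (by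
          rw [show t + 1 + 1 = t + 2 by ring]; exact (Ne.symm (hne2 t)))
        have a2 := h (t + 3) (hne31 t) (by
          rw [show t + 1 + 1 = t + 2 by ring]; exact hne32 t)
        rw [show t + 1 + 1 = t + 2 by ring] at a1 a2
        rw [hcyc] at a1
        exact ⟨iff_of_true a1 a2, hDne⟩
      · have a1 := h t (Ne.symm (hne1 t)) (by
          rw [show t + 1 + 1 = t + 2 by ring]; exact (Ne.symm (hne2 t)))
        have a2 := h (t + 3) (hne31 t) (by
          rw [show t + 1 + 1 = t + 2 by ring]; exact hne32 t)
        rw [show t + 1 + 1 = t + 2 by ring] at a1 a2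
        rw [hcyc] at a1
        exact ⟨iff_of_false (not_lt.mpr a1.le) (not_lt.mpr a2.le), hDne⟩
  have hDsign := sign_chain (fun t => det3 (p (q t)) (p (q (t + 1))) (p (q (t + 2)))) hlink
  -- coordinates form of the inner product
  have hip : ∀ a b : Fin n, ⟪p a - p b, v a - v b⟫
      = (p a 0 - p b 0) * (v a 0 - v b 0) + (p a 1 - p b 1) * (v a 1 - v b 1) := by
    intro a b
    rw [inner2]
    simp
  -- nondegenerate edges
  have hE' : ∀ t : Fin m,
      (p (q (t+1)) 0 - p (q t) 0)^2 + (p (q (t+1)) 1 - p (q t) 1)^2 ≠ 0 := by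
    intro t h
    have h0 : (p (q (t+1)) 0 - p (q t) 0)^2 = 0 := by
      nlinarith [sq_nonneg (p (q (t+1)) 0 - p (q t) 0), sq_nonneg (p (q (t+1)) 1 - p (q t) 1)]
    have h1 : (p (q (t+1)) 1 - p (q t) 1)^2 = 0 := by
      nlinarith [sq_nonneg (p (q (t+1)) 0 - p (q t) 0), sq_nonneg (p (q (t+1)) 1 - p (q t) 1)]
    have e0 := pow_eq_zero_iff (n := 2) (by norm_num) |>.mp h0
    have e1 := pow_eq_zero_iff (n := 2) (by norm_num) |>.mp h1
    have e : p (q (t+1)) = p (q t) := ept_ext (by linarith) (by linarith)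
    exact hne1 t (hq (hinj e))
  -- sign hypothesis for vertex_rigid
  have hCD : ∀ t : Fin m,
      (p (q (t+1)) 0 - p (q t) 0) * (p (q (t+2)) 1 - p (q (t+1)) 1)
        - (p (q (t+1)) 1 - p (q t) 1) * (p (q (t+2)) 0 - p (q (t+1)) 0)
      = det3 (p (q t)) (p (q (t + 1))) (p (q (t + 2))) := by
    intro t
    rw [det3_expand]; ring
  have hsign' : (∀ t : Fin m, 0 < (p (q (t+1)) 0 - p (q t) 0) * (p (q (t+2)) 1 - p (q (t+1)) 1)
        - (p (q (t+1)) 1 - p (q t) 1) * (p (q (t+2)) 0 - p (q (t+1)) 0))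
      ∨ (∀ t : Fin m, (p (q (t+1)) 0 - p (q t) 0) * (p (q (t+2)) 1 - p (q (t+1)) 1)
        - (p (q (t+1)) 1 - p (q t) 1) * (p (q (t+2)) 0 - p (q (t+1)) 0) < 0) := by
    rcases hDsign with h | h
    · left; intro t; rw [hCD t]; exact h t
    · right; intro t; rw [hCD t]; exact h t
  have hexp2' : ∀ t : Fin m, 0 ≤ (p (q t) 0 - p (q (t+2)) 0) * (v (q t) 0 - v (q (t+2)) 0)
      + (p (q t) 1 - p (q (t+2)) 1) * (v (q t) 1 - v (q (t+2)) 1) := by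
    intro t
    have h := hexp (q t) (q (t+2))
    rwa [hip] at h
  have htight2' : ∀ t : Fin m, (p (q t) 0 - p (q (t+1)) 0) * (v (q t) 0 - v (q (t+1)) 0)
      + (p (q t) 1 - p (q (t+1)) 1) * (v (q t) 1 - v (q (t+1)) 1) = 0 := by
    intro t
    have h := htight t
    rwa [hip] at h
  obtain ⟨r, hV⟩ := vertex_rigid (fun t => p (q t) 0) (fun t => p (q t) 1)
    (fun t => v (q t) 0) (fun t => v (q t) 1) hE' hsign' hexp2' htight2'
  have hV0 : ∀ t : Fin m, v (q t) 0 = v (q 0) 0 - r * (p (q t) 1 - p (q 0) 1) := fun t => (hV t).1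
  have hV1 : ∀ t : Fin m, v (q t) 1 = v (q 0) 1 + r * (p (q t) 0 - p (q 0) 0) := fun t => (hV t).2
  -- every point of the hull moves with the same infinitesimal rigid motion
  have hhull : ∀ a : Fin n, p a ∈ convexHull ℝ (Set.range fun t => p (q t)) →
      v a 0 = v (q 0) 0 - r * (p a 1 - p (q 0) 1) ∧
      v a 1 = v (q 0) 1 + r * (p a 0 - p (q 0) 0) := by
    intro a ha
    rw [convexHull_range_eq_exists_affineCombination] at ha
    obtain ⟨s, w, hw0, hw1, hwx⟩ := ha
    rw [Finset.affineCombination_eq_linear_combination s _ w hw1] at hwx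
    have hx0 : ∑ t ∈ s, w t * p (q t) 0 = p a 0 := by
      rw [← hwx]; exact (sum_apply2 s w _ 0).symm
    have hx1 : ∑ t ∈ s, w t * p (q t) 1 = p a 1 := by
      rw [← hwx]; exact (sum_apply2 s w _ 1).symm
    by_cases hvx : ∃ t : Fin m, p a = p (q t)
    · obtain ⟨t, ht⟩ := hvx
      have hat : a = q t := hinj ht
      subst hat
      exact ⟨hV0 t, hV1 t⟩
    · push_neg at hvx
      set W0 := v a 0 - v (q 0) 0 + r * (p a 1 - p (q 0) 1) with hW0def
      set W1 := v a 1 - v (q 0) 1 - r * (p a 0 - p (q 0) 0) with hW1def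
      suffices hfin : W0 = 0 ∧ W1 = 0 by
        obtain ⟨z0, z1⟩ := hfin
        rw [hW0def] at z0
        rw [hW1def] at z1
        constructor <;> linarith
      have hg : ∀ t : Fin m, 0 ≤ (p a 0 - p (q t) 0) * W0 + (p a 1 - p (q t) 1) * W1 := by
        intro t
        have h := hexp a (q t)
        rw [hip, hV0 t, hV1 t] at h
        have heq : (p a 0 - p (q t) 0) * (v a 0 - v (q 0) 0 + r * (p a 1 - p (q 0) 1))
            + (p a 1 - p (q t) 1) * (v a 1 - v (q 0) 1 - r * (p a 0 - p (q 0) 0))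
            = (p a 0 - p (q t) 0) * (v a 0 - (v (q 0) 0 - r * (p (q t) 1 - p (q 0) 1)))
            + (p a 1 - p (q t) 1) * (v a 1 - (v (q 0) 1 + r * (p (q t) 0 - p (q 0) 0))) := by
          ring
        rw [hW0def, hW1def, heq]
        exact h
      have hsum0 : ∑ t ∈ s, w t * ((p a 0 - p (q t) 0) * W0 + (p a 1 - p (q t) 1) * W1) = 0 := by
        have e1 : ∀ t ∈ s, w t * ((p a 0 - p (q t) 0) * W0 + (p a 1 - p (q t) 1) * W1)
            = (W0 * p a 0 + W1 * p a 1) * w t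
              - (W0 * (w t * p (q t) 0) + W1 * (w t * p (q t) 1)) := fun t _ => by ring
        rw [Finset.sum_congr rfl e1, Finset.sum_sub_distrib, ← Finset.mul_sum,
          Finset.sum_add_distrib, ← Finset.mul_sum, ← Finset.mul_sum, hw1, hx0, hx1]
        ring
      have hterm := (Finset.sum_eq_zero_iff_of_nonneg
        (fun t ht => mul_nonneg (hw0 t ht) (hg t))).mp hsum0
      obtain ⟨t0, ht0s, ht0⟩ := Finset.exists_ne_zero_of_sum_ne_zero
        (by rw [hw1]; exact one_ne_zero : ∑ t ∈ s, w t ≠ 0)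
      have g0 : (p a 0 - p (q t0) 0) * W0 + (p a 1 - p (q t0) 1) * W1 = 0 := by
        rcases mul_eq_zero.mp (hterm t0 ht0s) with h | h
        · exact absurd h ht0
        · exact h
      by_cases hcr : ∃ t ∈ s, w t ≠ 0 ∧
          (p a 0 - p (q t0) 0) * (p a 1 - p (q t) 1)
            - (p a 1 - p (q t0) 1) * (p a 0 - p (q t) 0) ≠ 0
      · obtain ⟨t1, ht1s, ht1w, hDcr⟩ := hcr
        have g1 : (p a 0 - p (q t1) 0) * W0 + (p a 1 - p (q t1) 1) * W1 = 0 := by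
          rcases mul_eq_zero.mp (hterm t1 ht1s) with h | h
          · exact absurd h ht1w
          · exact h
        exact solve2 g0 g1 hDcr
      · exfalso
        push_neg at hcr
        have hPt0 : p a ≠ p (q t0) := hvx t0
        have hex1 : ∃ t ∈ s, w t ≠ 0 ∧ p (q t) ≠ p (q t0) := by
          by_contra hno
          push_neg at hno
          apply hPt0
          apply ept_ext
          · rw [← hx0]
            have e2 : ∀ t ∈ s, w t * p (q t) 0 = w t * p (q t0) 0 := by
              intro t ht
              by_cases hwt : w t = 0
              · rw [hwt]; ring
              · rw [hno t ht hwt]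
            rw [Finset.sum_congr rfl e2, ← Finset.sum_mul, hw1, one_mul]
          · rw [← hx1]
            have e2 : ∀ t ∈ s, w t * p (q t) 1 = w t * p (q t0) 1 := by
              intro t ht
              by_cases hwt : w t = 0
              · rw [hwt]; ring
              · rw [hno t ht hwt]
            rw [Finset.sum_congr rfl e2, ← Finset.sum_mul, hw1, one_mul]
        obtain ⟨t1, ht1s, ht1w, ht1ne⟩ := hex1
        have hcross := hcr t1 ht1s ht1w
        have hd3 : det3 (p a) (p (q t0)) (p (q t1)) = 0 := by
          rw [det3_expand]; linear_combination hcross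
        have hcol := collinear_of_det3 (Ne.symm hPt0) hd3
        exact hgp a (q t0) (q t1)
          (fun h => hvx t0 (congrArg p h))
          (fun h => ht1ne (congrArg p h).symm)
          (fun h => hvx t1 (congrArg p h))
          hcol
  intro i j hi hj
  obtain ⟨hi0, hi1⟩ := hhull i hi
  obtain ⟨hj0, hj1⟩ := hhull j hj
  rw [hip, hi0, hi1, hj0, hj1]
  ring
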